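/- arXiv:2504.18450 — 2 statements merged into one kernel-verified Lean document; each statement's English description precedes it below -/
import Mathlib

section
/- Let H ∈ (0,1) be such that p = 1/H is a positive integer, and let X be a perturbed fractional Brownian motion X_t = C₀ B^H_t + Y_t. Set A_{0,p} = C₀^p E[Z^p] where Z is a standard normal random variable. Then there is a constant C > 0 such that for every N ≥ 1 and every i with 1 ≤ i ≤ N−1, E[( (X_{t_{i+1}} − X_{t_i})^p − A_{0,p}/N )²] ≤ C / N². -/
open MeasureTheory ProbabilityTheory Filter

noncomputable section

/-- A (centered or not) Gaussian process: every finite linear combination of its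
values has a (possibly degenerate) Gaussian law. -/
def IsGaussianProcess {Ω : Type*} [MeasurableSpace Ω] (P : Measure Ω)
    (X : ℝ → Ω → ℝ) : Prop :=
  (∀ t : ℝ, Measurable (X t)) ∧
  ∀ (n : ℕ) (t : Fin n → ℝ) (c : Fin n → ℝ), ∃ m : ℝ, ∃ v : NNReal,
    P.map (fun ω => ∑ i, c i * X (t i) ω) = gaussianReal m v

/-- A fractional Brownian motion with Hurst parameter `H`: a centered Gaussian
process with covariance `E[B_s B_t] = (1/2)(s^{2H} + t^{2H} - |t-s|^{2H})`. -/
structure IsFBM {Ω : Type*} [MeasurableSpace Ω] (P : Measure Ω) (H : ℝ)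
    (B : ℝ → Ω → ℝ) : Prop where
  gaussian : IsGaussianProcess P B
  centered : ∀ t : ℝ, 0 ≤ t → ∫ ω, B t ω ∂P = 0
  cov : ∀ s t : ℝ, 0 ≤ s → 0 ≤ t →
    ∫ ω, B s ω * B t ω ∂P = (1/2) * (s ^ (2*H) + t ^ (2*H) - |t - s| ^ (2*H))


/-- A perturbed fractional Brownian motion `X_t = C₀ B^H_t + Y_t`, where `B^H`
is a fBm with Hurst index `H`, and `Y` is a centered Gaussian process,
self-similar of index `H`, whose increments satisfy
`E|Y_t - Y_s|² ≤ C s^{2H-2}` for `0 < s < t`. -/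
structure IsPerturbedFBM {Ω : Type*} [MeasurableSpace Ω] (P : Measure Ω)
    (H C₀ : ℝ) (B Y X : ℝ → Ω → ℝ) : Prop where
  C₀_pos : 0 < C₀
  fbm : IsFBM P H B
  Ygaussian : IsGaussianProcess P Y
  Ycentered : ∀ t : ℝ, 0 ≤ t → ∫ ω, Y t ω ∂P = 0
  Yselfsim : ∀ c : ℝ, 0 < c → ∀ (n : ℕ) (t : Fin n → ℝ),
    P.map (fun ω => fun i => Y (c * t i) ω)
      = P.map (fun ω => fun i => c ^ H * Y (t i) ω)
  Yincr : ∃ C > 0, ∀ s t : ℝ, 0 < s → s < t →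
    ∫ ω, (Y t ω - Y s ω)^2 ∂P ≤ C * s ^ (2*H - 2)
  Xdef : ∀ (t : ℝ) (ω : Ω), X t ω = C₀ * B t ω + Y t ω

/-- The `q`-th moment of a standard normal random variable. -/
def gaussMoment (q : ℕ) : ℝ := ∫ x : ℝ, x ^ q ∂(gaussianReal 0 1)

/-! The increment of `X` over `[t_i, t_{i+1}]` is `C₀ ΔB + ΔY`, a sum of two centred Gaussian
variables, and a centred Gaussian `G` has `E[G^{2p}] = E[Z^{2p}] (E[G²])^p`. The fBm increment has
variance `N^{-2H}`; by self-similarity the increment of `Y` has variance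
`N^{-2H} E|Y_{i+1} - Y_i|² ≤ C N^{-2H} i^{2H-2} ≤ C N^{-2H}`. As `pH = 1`, both `2p`-th moments are
`O(N^{-2})`, as is `(A_{0,p}/N)²`, and `(u^p - d)² ≤ 2 u^{2p} + 2 d²` concludes. -/

open scoped NNReal

lemma sq_pow_add_sub_le (a b d : ℝ) (p : ℕ) :
    ((a + b) ^ p - d) ^ 2 ≤ 2 * 4 ^ p * (a ^ (2 * p) + b ^ (2 * p)) + 2 * d ^ 2 := by
  have hsq : (a + b) ^ 2 ≤ 2 * (a ^ 2 + b ^ 2) := by nlinarith [sq_nonneg (a - b)]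
  have hpow : (a ^ 2 + b ^ 2) ^ p ≤ 2 ^ p * ((a ^ 2) ^ p + (b ^ 2) ^ p) :=
    (add_pow_le (sq_nonneg a) (sq_nonneg b) p).trans
      (by gcongr; exacts [by norm_num, Nat.sub_le p 1])
  calc ((a + b) ^ p - d) ^ 2 ≤ 2 * ((a + b) ^ p) ^ 2 + 2 * d ^ 2 := by
        nlinarith [sq_nonneg ((a + b) ^ p + d)]
    _ = 2 * ((a + b) ^ 2) ^ p + 2 * d ^ 2 := by rw [← pow_mul, ← pow_mul, mul_comm p]
    _ ≤ 2 * (2 * (a ^ 2 + b ^ 2)) ^ p + 2 * d ^ 2 := by gcongr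
    _ = 2 * 2 ^ p * (a ^ 2 + b ^ 2) ^ p + 2 * d ^ 2 := by rw [mul_pow]; ring
    _ ≤ 2 * 2 ^ p * (2 ^ p * ((a ^ 2) ^ p + (b ^ 2) ^ p)) + 2 * d ^ 2 := by gcongr
    _ = 2 * 4 ^ p * (a ^ (2 * p) + b ^ (2 * p)) + 2 * d ^ 2 := by
        rw [pow_mul, pow_mul, show (4 : ℝ) = 2 * 2 by norm_num, mul_pow]
        ring

lemma integral_sq_pow_add_sub_le {Ω : Type*} [MeasurableSpace Ω] {P : Measure Ω}
    [IsProbabilityMeasure P] {u w : Ω → ℝ} {p : ℕ}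
    (hu : Integrable (fun ω => u ω ^ (2 * p)) P) (hw : Integrable (fun ω => w ω ^ (2 * p)) P)
    (d : ℝ) :
    ∫ ω, ((u ω + w ω) ^ p - d) ^ 2 ∂P
      ≤ 2 * 4 ^ p * (∫ ω, u ω ^ (2 * p) ∂P + ∫ ω, w ω ^ (2 * p) ∂P) + 2 * d ^ 2 := by
  have huw : Integrable (fun ω => u ω ^ (2 * p) + w ω ^ (2 * p)) P := hu.add hw
  have hmaj : Integrable (fun ω => 2 * 4 ^ p * (u ω ^ (2 * p) + w ω ^ (2 * p)) + 2 * d ^ 2) P :=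
    (huw.const_mul _).add (integrable_const _)
  calc ∫ ω, ((u ω + w ω) ^ p - d) ^ 2 ∂P
      ≤ ∫ ω, 2 * 4 ^ p * (u ω ^ (2 * p) + w ω ^ (2 * p)) + 2 * d ^ 2 ∂P :=
        integral_mono_of_nonneg (.of_forall fun ω => sq_nonneg _) hmaj
          (.of_forall fun ω => sq_pow_add_sub_le _ _ d p)
    _ = 2 * 4 ^ p * (∫ ω, u ω ^ (2 * p) ∂P + ∫ ω, w ω ^ (2 * p) ∂P) + 2 * d ^ 2 := by
        rw [integral_add (huw.const_mul _) (integrable_const _), integral_const_mul,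
          integral_add hu hw, integral_const, probReal_univ, one_smul]

lemma rpow_two_mul_pow_of_mul_eq_one {x H : ℝ} (hx : 0 ≤ x) {p : ℕ} (hpH : (p : ℝ) * H = 1) :
    (x ^ (2 * H)) ^ p = x ^ 2 := by
  rw [← Real.rpow_natCast, ← Real.rpow_mul hx, mul_assoc, mul_comm H, hpH, mul_one]
  exact_mod_cast Real.rpow_natCast x 2

lemma gaussMoment_two : gaussMoment 2 = 1 := by
  rw [gaussMoment, ← variance_of_integral_eq_zero measurable_id'.aemeasurable
    integral_id_gaussianReal, variance_fun_id_gaussianReal, NNReal.coe_one]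

lemma integrable_pow_gaussianReal (m : ℝ) (v : ℝ≥0) (k : ℕ) :
    Integrable (fun x : ℝ => x ^ k) (gaussianReal m v) :=
  ((memLp_id_gaussianReal' k (ENNReal.natCast_ne_top k)).integrable_norm_pow').mono'
    (by fun_prop) (.of_forall fun x => (norm_pow x k).le)

lemma integral_pow_gaussianReal_zero (v : ℝ≥0) (k : ℕ) :
    ∫ x, x ^ k ∂gaussianReal 0 v = √(v : ℝ) ^ k * gaussMoment k := by
  have hv : gaussianReal 0 v = (gaussianReal 0 1).map (√(v : ℝ) * ·) := by
    rw [gaussianReal_map_const_mul, mul_zero, mul_one]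
    congr
    ext
    simp
  rw [hv, integral_map (by fun_prop) (by fun_prop)]
  simp_rw [mul_pow]
  rw [integral_const_mul, gaussMoment]

lemma gaussMoment_two_mul_nonneg (p : ℕ) : 0 ≤ gaussMoment (2 * p) :=
  integral_nonneg fun x => by rw [pow_mul]; positivity

section GaussianLaw

variable {Ω : Type*} [MeasurableSpace Ω] {P : Measure Ω} {f : Ω → ℝ} {m : ℝ} {v : ℝ≥0}

lemma integrable_pow_of_map_eq_gaussianReal (hf : AEMeasurable f P)
    (h : P.map f = gaussianReal m v) (k : ℕ) : Integrable (fun ω => f ω ^ k) P := by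
  have := integrable_pow_gaussianReal m v k
  rwa [← h, integrable_map_measure (by fun_prop) hf] at this

lemma integral_pow_of_map_eq_gaussianReal (hf : AEMeasurable f P)
    (h : P.map f = gaussianReal m v) (k : ℕ) :
    ∫ ω, f ω ^ k ∂P = ∫ x, x ^ k ∂gaussianReal m v := by
  rw [← h, integral_map hf (by fun_prop)]

lemma integral_eq_of_map_eq_gaussianReal (hf : AEMeasurable f P)
    (h : P.map f = gaussianReal m v) : ∫ ω, f ω ∂P = m := by
  simpa using integral_pow_of_map_eq_gaussianReal hf h 1

lemma integral_pow_two_mul_of_map_eq_gaussianReal (hf : AEMeasurable f P)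
    (h : P.map f = gaussianReal m v) (hmean : ∫ ω, f ω ∂P = 0) (p : ℕ) :
    ∫ ω, f ω ^ (2 * p) ∂P = gaussMoment (2 * p) * (∫ ω, f ω ^ 2 ∂P) ^ p := by
  obtain rfl : m = 0 := (integral_eq_of_map_eq_gaussianReal hf h).symm.trans hmean
  rw [integral_pow_of_map_eq_gaussianReal hf h, integral_pow_of_map_eq_gaussianReal hf h,
    integral_pow_gaussianReal_zero, integral_pow_gaussianReal_zero, gaussMoment_two, mul_one,
    pow_mul, Real.sq_sqrt v.coe_nonneg, mul_comm]

end GaussianLaw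

section Increments

open scoped ENNReal

variable {Ω : Type*} [MeasurableSpace Ω] {P : Measure Ω} {X : ℝ → Ω → ℝ}

lemma IsGaussianProcess.map_eq_gaussianReal (hX : IsGaussianProcess P X) (t : ℝ) :
    ∃ m : ℝ, ∃ v : ℝ≥0, P.map (X t) = gaussianReal m v := by
  obtain ⟨m, v, h⟩ := hX.2 1 ![t] ![1]
  exact ⟨m, v, by simpa using h⟩

lemma IsGaussianProcess.map_sub_eq_gaussianReal (hX : IsGaussianProcess P X) (s t : ℝ) :
    ∃ m : ℝ, ∃ v : ℝ≥0, P.map (fun ω => X t ω - X s ω) = gaussianReal m v := by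
  obtain ⟨m, v, h⟩ := hX.2 2 ![t, s] ![1, -1]
  refine ⟨m, v, ?_⟩
  simpa [Fin.sum_univ_two, ← sub_eq_add_neg] using h

lemma IsGaussianProcess.memLp (hX : IsGaussianProcess P X) (t : ℝ) {q : ℝ≥0∞} (hq : q ≠ ∞) :
    MemLp (X t) q P := by
  obtain ⟨m, v, h⟩ := hX.map_eq_gaussianReal t
  exact (h ▸ memLp_id_gaussianReal' q hq).comp_of_map (hX.1 t).aemeasurable

lemma IsGaussianProcess.integrable_sub_pow (hX : IsGaussianProcess P X) (s t : ℝ) (k : ℕ) :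
    Integrable (fun ω => (X t ω - X s ω) ^ k) P := by
  obtain ⟨m, v, h⟩ := hX.map_sub_eq_gaussianReal s t
  exact integrable_pow_of_map_eq_gaussianReal ((hX.1 t).sub (hX.1 s)).aemeasurable h k

lemma IsGaussianProcess.integral_sub_pow_two_mul (hX : IsGaussianProcess P X) {s t : ℝ}
    (hs : ∫ ω, X s ω ∂P = 0) (ht : ∫ ω, X t ω ∂P = 0) (p : ℕ) :
    ∫ ω, (X t ω - X s ω) ^ (2 * p) ∂P
      = gaussMoment (2 * p) * (∫ ω, (X t ω - X s ω) ^ 2 ∂P) ^ p := by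
  obtain ⟨m, v, h⟩ := hX.map_sub_eq_gaussianReal s t
  refine integral_pow_two_mul_of_map_eq_gaussianReal ((hX.1 t).sub (hX.1 s)).aemeasurable h ?_ p
  simp only [Pi.sub_apply]
  rw [integral_sub (memLp_one_iff_integrable.1 (hX.memLp t ENNReal.one_ne_top))
    (memLp_one_iff_integrable.1 (hX.memLp s ENNReal.one_ne_top)), hs, ht, sub_zero]

def IsSelfSimilar (P : Measure Ω) (H : ℝ) (Y : ℝ → Ω → ℝ) : Prop :=
  ∀ c : ℝ, 0 < c → ∀ (n : ℕ) (t : Fin n → ℝ),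
    P.map (fun ω => fun i => Y (c * t i) ω) = P.map (fun ω => fun i => c ^ H * Y (t i) ω)

lemma integral_sub_sq_comp_const_mul {H : ℝ} {Y : ℝ → Ω → ℝ} (hY : ∀ t, Measurable (Y t))
    (hss : IsSelfSimilar P H Y)
    {c : ℝ} (hc : 0 < c) (a b : ℝ) :
    ∫ ω, (Y (c * a) ω - Y (c * b) ω) ^ 2 ∂P = c ^ (2 * H) * ∫ ω, (Y a ω - Y b ω) ^ 2 ∂P := by
  let g : (Fin 2 → ℝ) → ℝ := fun x => (x 0 - x 1) ^ 2
  have hg : Measurable g := by fun_prop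
  have hlaw := congrArg (fun μ => ∫ x, g x ∂μ) (hss c hc 2 ![a, b])
  rw [integral_map (by fun_prop) hg.aestronglyMeasurable,
    integral_map (by fun_prop) hg.aestronglyMeasurable] at hlaw
  simp only [g, Matrix.cons_val_zero, Matrix.cons_val_one] at hlaw
  rw [hlaw, ← integral_const_mul]
  congr with ω
  rw [← mul_sub, mul_pow, ← Real.rpow_natCast, ← Real.rpow_mul hc.le, Nat.cast_ofNat, mul_comm H]

lemma integral_sub_sq_le_of_selfSimilar {H K : ℝ} {Y : ℝ → Ω → ℝ} (hY : ∀ t, Measurable (Y t))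
    (hss : IsSelfSimilar P H Y) (hH : H < 1) (hK : 0 ≤ K)
    (hincr : ∀ s t : ℝ, 0 < s → s < t → ∫ ω, (Y t ω - Y s ω) ^ 2 ∂P ≤ K * s ^ (2 * H - 2))
    {c x : ℝ} (hc : 0 < c) (hx : 1 ≤ x) :
    ∫ ω, (Y (c * (x + 1)) ω - Y (c * x) ω) ^ 2 ∂P ≤ K * c ^ (2 * H) := by
  rw [integral_sub_sq_comp_const_mul hY hss hc, mul_comm K]
  gcongr
  calc ∫ ω, (Y (x + 1) ω - Y x ω) ^ 2 ∂P ≤ K * x ^ (2 * H - 2) :=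
        hincr x (x + 1) (by linarith) (lt_add_one x)
    _ ≤ K := mul_le_of_le_one_right hK (Real.rpow_le_one_of_one_le_of_nonpos hx (by linarith))

end Increments

section PerturbedFBM

variable {Ω : Type*} [MeasurableSpace Ω] {P : Measure Ω} {H C₀ : ℝ} {B Y X : ℝ → Ω → ℝ}

lemma IsFBM.integral_sub_sq (hB : IsFBM P H B) (hH : 0 < H)
    {s t : ℝ} (hs : 0 ≤ s) (ht : 0 ≤ t) :
    ∫ ω, (B t ω - B s ω) ^ 2 ∂P = |t - s| ^ (2 * H) := by
  have hprod (u u' : ℝ) : Integrable (fun ω => B u ω * B u' ω) P :=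
    (hB.gaussian.memLp u (q := 2) ENNReal.ofNat_ne_top).integrable_mul
      (hB.gaussian.memLp u' (q := 2) ENNReal.ofNat_ne_top)
  have hsum : Integrable (fun ω => B t ω * B t ω + B s ω * B s ω) P :=
    (hprod t t).add (hprod s s)
  have hvar (u : ℝ) (hu : 0 ≤ u) : ∫ ω, B u ω * B u ω ∂P = u ^ (2 * H) := by
    rw [hB.cov u u hu hu, sub_self, abs_zero, Real.zero_rpow (by positivity)]
    ring
  have hexpand : (fun ω => (B t ω - B s ω) ^ 2)
      = fun ω => B t ω * B t ω + B s ω * B s ω - 2 * (B s ω * B t ω) := by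
    ext ω; ring
  rw [hexpand, integral_sub hsum ((hprod s t).const_mul 2),
    integral_add (hprod t t) (hprod s s),
    integral_const_mul, hvar t ht, hvar s hs, hB.cov s t hs ht]
  ring

lemma IsFBM.integral_sub_pow_two_mul (hB : IsFBM P H B) (hH : 0 < H) {s t : ℝ} (hs : 0 ≤ s)
    (ht : 0 ≤ t) (p : ℕ) :
    ∫ ω, (B t ω - B s ω) ^ (2 * p) ∂P = gaussMoment (2 * p) * (|t - s| ^ (2 * H)) ^ p := by
  rw [hB.gaussian.integral_sub_pow_two_mul (hB.centered s hs) (hB.centered t ht),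
    hB.integral_sub_sq hH hs ht]

lemma IsPerturbedFBM.integral_Y_sub_pow_le (hX : IsPerturbedFBM P H C₀ B Y X) (hH : H < 1)
    {K : ℝ} (hK : 0 ≤ K)
    (hincr : ∀ s t : ℝ, 0 < s → s < t → ∫ ω, (Y t ω - Y s ω) ^ 2 ∂P ≤ K * s ^ (2 * H - 2))
    {c x : ℝ} (hc : 0 < c) (hx : 1 ≤ x) (p : ℕ) :
    ∫ ω, (Y (c * (x + 1)) ω - Y (c * x) ω) ^ (2 * p) ∂P
      ≤ gaussMoment (2 * p) * (K * c ^ (2 * H)) ^ p := by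
  rw [hX.Ygaussian.integral_sub_pow_two_mul (hX.Ycentered _ (by positivity))
    (hX.Ycentered _ (by positivity))]
  gcongr
  · exact gaussMoment_two_mul_nonneg p
  · exact integral_sub_sq_le_of_selfSimilar hX.Ygaussian.1 hX.Yselfsim hH hK hincr hc hx

lemma IsPerturbedFBM.integral_sq_sub_pow_sub_le [IsProbabilityMeasure P]
    (hX : IsPerturbedFBM P H C₀ B Y X) (s t d : ℝ) (p : ℕ) :
    ∫ ω, ((X t ω - X s ω) ^ p - d) ^ 2 ∂P
      ≤ 2 * 4 ^ p * (C₀ ^ (2 * p) * ∫ ω, (B t ω - B s ω) ^ (2 * p) ∂P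
        + ∫ ω, (Y t ω - Y s ω) ^ (2 * p) ∂P) + 2 * d ^ 2 := by
  have hincr (ω : Ω) : X t ω - X s ω = C₀ * (B t ω - B s ω) + (Y t ω - Y s ω) := by
    rw [hX.Xdef, hX.Xdef]
    ring
  simp_rw [hincr]
  have hB : Integrable (fun ω => (C₀ * (B t ω - B s ω)) ^ (2 * p)) P := by
    simpa only [mul_pow] using (hX.fbm.gaussian.integrable_sub_pow s t (2 * p)).const_mul _
  simpa only [mul_pow, integral_const_mul] using
    integral_sq_pow_add_sub_le hB (hX.Ygaussian.integrable_sub_pow s t (2 * p)) d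

end PerturbedFBM

theorem stmt_10_general {Ω : Type*} [MeasurableSpace Ω] (P : Measure Ω) [IsProbabilityMeasure P]
    (H C₀ : ℝ) (hH : H ∈ Set.Ioo (0:ℝ) 1) (B Y X : ℝ → Ω → ℝ)
    (hX : IsPerturbedFBM P H C₀ B Y X)
    (p : ℕ) (hpH : (p : ℝ) * H = 1) :
    ∃ C > 0, ∀ N : ℕ, 1 ≤ N → ∀ i : ℕ, 1 ≤ i → i < N →
      ∫ ω, ((X (((i:ℝ)+1)/N) ω - X ((i:ℝ)/N) ω) ^ p
          - C₀ ^ p * gaussMoment p / N)^2 ∂P ≤ C / (N:ℝ)^2 := by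
  obtain ⟨K, hK, hYincr⟩ := hX.Yincr
  have hM := gaussMoment_two_mul_nonneg p
  have hC₀ := hX.C₀_pos
  set M := gaussMoment (2 * p)
  set A := C₀ ^ p * gaussMoment p
  refine ⟨2 * 4 ^ p * (C₀ ^ (2 * p) + K ^ p) * M + 2 * A ^ 2 + 1,
    by linarith [mul_nonneg (by positivity : (0 : ℝ) ≤ 2 * 4 ^ p * (C₀ ^ (2 * p) + K ^ p)) hM,
      sq_nonneg A], fun N hN i hi _ => ?_⟩
  have hN : (0 : ℝ) < (N : ℝ)⁻¹ := by positivity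
  rw [div_eq_inv_mul, div_eq_inv_mul]
  have hB := hX.fbm.integral_sub_pow_two_mul hH.1 (s := (N : ℝ)⁻¹ * i)
    (t := (N : ℝ)⁻¹ * (i + 1)) (by positivity) (by positivity) p
  rw [show (N : ℝ)⁻¹ * (i + 1) - (N : ℝ)⁻¹ * i = (N : ℝ)⁻¹ by ring, abs_of_pos hN,
    rpow_two_mul_pow_of_mul_eq_one hN.le hpH] at hB
  have hY := hX.integral_Y_sub_pow_le hH.2 hK.le hYincr hN (x := i) (by exact_mod_cast hi) p
  rw [mul_pow, rpow_two_mul_pow_of_mul_eq_one hN.le hpH] at hY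
  calc _ ≤ _ := hX.integral_sq_sub_pow_sub_le _ _ _ p
    _ ≤ 2 * 4 ^ p * (C₀ ^ (2 * p) * (M * (N : ℝ)⁻¹ ^ 2) + M * (K ^ p * (N : ℝ)⁻¹ ^ 2))
          + 2 * (A / N) ^ 2 := by
        rw [hB]
        gcongr
    _ ≤ _ := by
        rw [le_div_iff₀ (by positivity)]
        field_simp
        linarith

/-- For a perturbed fBm such that `p = 1/H` is a positive integer, with
`A_{0,p} = C₀^p E[Z^p]` (`Z` standard normal): there is `C > 0` such that for
every `N ≥ 1` and `1 ≤ i ≤ N-1`,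
`E[((X_{t_{i+1}} - X_{t_i})^p - A_{0,p}/N)²] ≤ C/N²`. -/
theorem stmt_10 {Ω : Type*} [MeasurableSpace Ω] (P : Measure Ω) [IsProbabilityMeasure P]
    (H C₀ : ℝ) (hH : H ∈ Set.Ioo (0:ℝ) 1) (B Y X : ℝ → Ω → ℝ)
    (hX : IsPerturbedFBM P H C₀ B Y X)
    (p : ℕ) (hp : 1 ≤ p) (hpH : (p : ℝ) * H = 1) :
    ∃ C > 0, ∀ N : ℕ, 1 ≤ N → ∀ i : ℕ, 1 ≤ i → i < N →
      ∫ ω, ((X (((i:ℝ)+1)/N) ω - X ((i:ℝ)/N) ω) ^ p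
          - C₀ ^ p * gaussMoment p / N)^2 ∂P ≤ C / (N:ℝ)^2 :=
  stmt_10_general P H C₀ hH B Y X hX p hpH
end
end

section
/- Let α ∈ (1, 2] and let G_α(t, ·) be the fractional heat kernel on ℝ, i.e. the function whose Fourier transform in the space variable is ξ ↦ e^{−t|ξ|^α} (for t > 0), with G_α(t, ·) = 0 for t ≤ 0. Then for every T > 0 there exists a constant C_T > 0 such that for all 0 ≤ s ≤ t ≤ T and all δ > 0: ∫₀^s ∫_ℝ ( G_α(t+δ−a, x−y) − G_α(t−a, x−y) )² dy da ≤ C_T δ² (t−s)^{−(α+1)/α}. Equivalently, by Parseval's identity, ∫₀^s ∫_ℝ | e^{−(t+δ−a)|ξ|^α} − e^{−(t−a)|ξ|^α} |² dξ da ≤ C_T δ² (t−s)^{−(α+1)/α}. -/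
/-!
With `r = |ξ| ^ α` and `l = t - a`, the integrand is `e^{-2lr} (1 - e^{-δr})² ≤ δ² r² e^{-2lr}`,
and the Gamma integral gives `∫_ℝ |ξ|^{2α} e^{-2l|ξ|^α} dξ = (2/α) Γ(2 + 1/α) (2l)^{-(2 + 1/α)}`.
Integrating `l^{-(2 + 1/α)}` over `l ∈ [t - s, t]` then costs at most
`(t - s)^{-(1 + 1/α)} / (1 + 1/α)`.
-/

open MeasureTheory Set Real

theorem sq_exp_neg_sub_exp_neg_le {l δ r : ℝ} (hδ : 0 ≤ δ) (hr : 0 ≤ r) :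
    (exp (-(l + δ) * r) - exp (-l * r)) ^ 2 ≤ δ ^ 2 * (r ^ 2 * exp (-(2 * l) * r)) := by
  have h_lower : 0 ≤ 1 - exp (-(δ * r)) := by
    simpa using exp_le_one_iff.mpr (neg_nonpos.mpr (mul_nonneg hδ hr))
  have h_upper : 1 - exp (-(δ * r)) ≤ δ * r := by linarith [add_one_le_exp (-(δ * r))]
  calc (exp (-(l + δ) * r) - exp (-l * r)) ^ 2
      = exp (-(2 * l) * r) * (1 - exp (-(δ * r))) ^ 2 := by
        rw [show -(l + δ) * r = -l * r + -(δ * r) by ring,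
          show -(2 * l) * r = -l * r + -l * r by ring, exp_add, exp_add]
        ring
    _ ≤ exp (-(2 * l) * r) * (δ * r) ^ 2 := by gcongr
    _ = δ ^ 2 * (r ^ 2 * exp (-(2 * l) * r)) := by ring

theorem integral_sq_abs_rpow_mul_exp_neg_mul {α b : ℝ} (hα : 0 < α) (hb : 0 < b) :
    ∫ ξ : ℝ, (|ξ| ^ α) ^ 2 * exp (-b * |ξ| ^ α)
      = 2 / α * Gamma (2 + 1 / α) * b ^ (-(2 + 1 / α)) := by
  rw [integral_comp_abs (f := fun x => (x ^ α) ^ 2 * exp (-b * x ^ α))]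
  have h_rpow : ∫ x in Ioi (0 : ℝ), (x ^ α) ^ 2 * exp (-b * x ^ α)
      = ∫ x in Ioi (0 : ℝ), x ^ (2 * α) * exp (-b * x ^ α) := by
    refine setIntegral_congr_fun measurableSet_Ioi fun x hx => ?_
    rw [mul_comm 2 α, rpow_mul hx.le, rpow_two]
  have h_exponent : (2 * α + 1) / α = 2 + 1 / α := by field_simp
  rw [h_rpow, integral_rpow_mul_exp_neg_mul_rpow hα (by linarith) hb, neg_div, h_exponent]
  ring

theorem integral_sq_exp_neg_sub_exp_neg_le {α l δ : ℝ} (hα : 0 < α) (hl : 0 < l) (hδ : 0 ≤ δ) :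
    ∫ ξ : ℝ, (exp (-(l + δ) * |ξ| ^ α) - exp (-l * |ξ| ^ α)) ^ 2
      ≤ 2 / α * Gamma (2 + 1 / α) * δ ^ 2 * l ^ (-(2 + 1 / α)) := by
  have hΓ := Gamma_pos_of_pos (by positivity : 0 < 2 + 1 / α)
  have h_value := integral_sq_abs_rpow_mul_exp_neg_mul hα (by positivity : 0 < 2 * l)
  have h_integrable : Integrable fun ξ : ℝ => (|ξ| ^ α) ^ 2 * exp (-(2 * l) * |ξ| ^ α) :=
    Integrable.of_integral_ne_zero <| by rw [h_value]; positivity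
  calc ∫ ξ : ℝ, (exp (-(l + δ) * |ξ| ^ α) - exp (-l * |ξ| ^ α)) ^ 2
      ≤ ∫ ξ : ℝ, δ ^ 2 * ((|ξ| ^ α) ^ 2 * exp (-(2 * l) * |ξ| ^ α)) :=
        integral_mono_of_nonneg (.of_forall fun _ => sq_nonneg _) (h_integrable.const_mul _)
          (.of_forall fun ξ => sq_exp_neg_sub_exp_neg_le hδ (by positivity))
    _ = 2 / α * Gamma (2 + 1 / α) * δ ^ 2 * (2 * l) ^ (-(2 + 1 / α)) := by
        rw [integral_const_mul, h_value]; ring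
    _ ≤ 2 / α * Gamma (2 + 1 / α) * δ ^ 2 * l ^ (-(2 + 1 / α)) := by
        refine mul_le_mul_of_nonneg_left ?_ (by positivity)
        exact rpow_le_rpow_of_nonpos hl (by linarith : l ≤ 2 * l) (neg_nonpos.mpr (by positivity))

theorem setIntegral_Ioc_sub_rpow_neg_le {β s t : ℝ} (hβ : 1 < β) (hs : 0 ≤ s) (hst : s < t) :
    ∫ a in Ioc 0 s, (t - a) ^ (-β) ≤ (t - s) ^ (1 - β) / (β - 1) := by
  have hts : 0 < t - s := by linarith
  rw [← intervalIntegral.integral_of_le hs,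
    intervalIntegral.integral_comp_sub_left (fun u => u ^ (-β)) t, sub_zero,
    integral_rpow (.inr ⟨by linarith, notMem_uIcc_of_lt hts (by linarith)⟩),
    show -β + 1 = 1 - β by ring]
  have ht : 0 < t := by linarith
  rw [show (t ^ (1 - β) - (t - s) ^ (1 - β)) / (1 - β) = ((t - s) ^ (1 - β) - t ^ (1 - β)) / (β - 1)
    by rw [div_eq_div_iff (by linarith) (by linarith)]; ring]
  exact div_le_div_of_nonneg_right (sub_le_self _ (by positivity)) (by linarith)

theorem setIntegral_integral_sq_exp_neg_sub_exp_neg_le {α s t δ : ℝ} (hα : 0 < α) (hs : 0 ≤ s)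
    (hst : s < t) (hδ : 0 ≤ δ) :
    ∫ a in Ioc 0 s, ∫ ξ : ℝ, (exp (-(t + δ - a) * |ξ| ^ α) - exp (-(t - a) * |ξ| ^ α)) ^ 2
      ≤ 2 / α * Gamma (2 + 1 / α) / (1 + 1 / α) * δ ^ 2 * (t - s) ^ (-(α + 1) / α) := by
  have hΓ := Gamma_pos_of_pos (by positivity : 0 < 2 + 1 / α)
  have h_integrable : IntegrableOn (fun a => (t - a) ^ (-(2 + 1 / α))) (Ioc 0 s) := by
    refine (ContinuousOn.integrableOn_Icc ?_).mono_set Ioc_subset_Icc_self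
    exact (continuousOn_const.sub continuousOn_id).rpow_const fun a ha =>
      .inl (sub_pos.mpr (ha.2.trans_lt hst)).ne'
  calc ∫ a in Ioc 0 s, ∫ ξ : ℝ, (exp (-(t + δ - a) * |ξ| ^ α) - exp (-(t - a) * |ξ| ^ α)) ^ 2
      ≤ ∫ a in Ioc 0 s, 2 / α * Gamma (2 + 1 / α) * δ ^ 2 * (t - a) ^ (-(2 + 1 / α)) := by
        refine integral_mono_of_nonneg (.of_forall fun _ => integral_nonneg fun _ => sq_nonneg _)
          (h_integrable.const_mul _) ((ae_restrict_iff' measurableSet_Ioc).mpr (.of_forall ?_))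
        intro a ha
        simp only [add_sub_right_comm t δ a]
        exact integral_sq_exp_neg_sub_exp_neg_le hα (by linarith [ha.2]) hδ
    _ ≤ 2 / α * Gamma (2 + 1 / α) * δ ^ 2 * ((t - s) ^ (1 - (2 + 1 / α)) / (2 + 1 / α - 1)) := by
        rw [integral_const_mul]
        refine mul_le_mul_of_nonneg_left (setIntegral_Ioc_sub_rpow_neg_le ?_ hs hst) (by positivity)
        have : 0 < 1 / α := by positivity
        linarith
    _ = 2 / α * Gamma (2 + 1 / α) / (1 + 1 / α) * δ ^ 2 * (t - s) ^ (-(α + 1) / α) := by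
        rw [show 1 - (2 + 1 / α) = -(α + 1) / α by field_simp; ring,
          show 2 + 1 / α - 1 = 1 + 1 / α by ring]
        ring

theorem stmt_14_general (α : ℝ) (hα : α ∈ Set.Ioc (1:ℝ) 2) (T : ℝ) :
    ∃ C > 0, ∀ s t δ : ℝ, 0 ≤ s → s ≤ t → t ≤ T → 0 < δ →
      ENNReal.ofReal (∫ a in Set.Ioc (0:ℝ) s, ∫ ξ : ℝ,
          (Real.exp (-(t + δ - a) * |ξ| ^ α) - Real.exp (-(t - a) * |ξ| ^ α))^2)
        ≤ ENNReal.ofReal (C * δ^2) * ENNReal.ofReal (t - s) ^ (-(α + 1)/α) := by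
  have hα0 : 0 < α := by linarith [hα.1]
  have hΓ := Gamma_pos_of_pos (by positivity : 0 < 2 + 1 / α)
  refine ⟨2 / α * Gamma (2 + 1 / α) / (1 + 1 / α), by positivity,
    fun s t δ hs hst _ hδ => ?_⟩
  rcases hst.eq_or_lt with rfl | hst
  · have h_exponent : -(α + 1) / α < 0 := div_neg_of_neg_of_pos (by linarith) hα0
    rw [sub_self, ENNReal.ofReal_zero, ENNReal.zero_rpow_of_neg h_exponent,
      ENNReal.mul_top (ENNReal.ofReal_pos.mpr (by positivity)).ne']
    exact le_top
  · rw [ENNReal.ofReal_rpow_of_pos (by linarith), ← ENNReal.ofReal_mul (by positivity)]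
    exact ENNReal.ofReal_le_ofReal
      (setIntegral_integral_sq_exp_neg_sub_exp_neg_le hα0 hs hst hδ.le)

/-- For `α ∈ (1,2]` and `T > 0` there is `C_T > 0` such that for all
`0 ≤ s ≤ t ≤ T` and `δ > 0`,
`∫₀^s ∫_ℝ (G_α(t+δ-a, x-y) - G_α(t-a, x-y))² dy da ≤ C_T δ² (t-s)^{-(α+1)/α}`,
stated equivalently (via Parseval's identity, since the spatial Fourier
transform of `G_α(t,·)` is `ξ ↦ e^{-t|ξ|^α}`) as
`∫₀^s ∫_ℝ |e^{-(t+δ-a)|ξ|^α} - e^{-(t-a)|ξ|^α}|² dξ da ≤ C_T δ² (t-s)^{-(α+1)/α}`.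
The right-hand side is interpreted in `[0,∞]` so that it equals `∞` when
`s = t`. -/
theorem stmt_14 (α : ℝ) (hα : α ∈ Set.Ioc (1:ℝ) 2) (T : ℝ) (hT : 0 < T) :
    ∃ C > 0, ∀ s t δ : ℝ, 0 ≤ s → s ≤ t → t ≤ T → 0 < δ →
      ENNReal.ofReal (∫ a in Set.Ioc (0:ℝ) s, ∫ ξ : ℝ,
          (Real.exp (-(t + δ - a) * |ξ| ^ α) - Real.exp (-(t - a) * |ξ| ^ α))^2)
        ≤ ENNReal.ofReal (C * δ^2) * ENNReal.ofReal (t - s) ^ (-(α + 1)/α) :=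
  stmt_14_general α hα T
end
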